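/- Let H be a connected subgroup of O(n) such that H equals the identity component of its own normalizer in O(n). Then for any subgroup G of O(n) with identity component equal to H, the normalizer N_{O(n)}(G) has identity component equal to H, and hence G has finite index in N_{O(n)}(G). -/

import Mathlib

/-!
Conjugation by an element of `N(G)` preserves `G`, hence its identity component `H`; so
`N(G)⁰ ≤ N(H)⁰ = H ≤ N(G)⁰`. For the index, `N(G)` is closed in the compact group `O(n)`, so it
suffices that its identity component, which lies in `G`, is open in `N(G)`. This is the local
half of Cartan's closed subgroup theorem: by the inverse function theorem, points of `N(G)` near
`1` are `exp Y * exp Z` with `Y` in the Lie algebra `{Y | ∀ t, exp (t Y) ∈ N(G)}` and `Z` in a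
complement `𝔪` of it, and `exp Z ∈ N(G)` forces `Z = 0` for small `Z`, since rescaled such `Z`
would accumulate at a unit vector of `𝔪` in the Lie algebra. So these points lie on
one-parameter subgroups of `N(G)`.
-/

open Matrix

/-- The real orthogonal group `O(n)` as a topological group. -/
abbrev On (n : ℕ) : Type := ↥(Matrix.orthogonalGroup (Fin n) ℝ)

instance (n : ℕ) : IsTopologicalGroup (On n) where
  continuous_inv := Continuous.subtype_mk (continuous_star.comp continuous_subtype_val) _

/-- The identity component of a subgroup `H` of a topological group,
viewed as a subgroup of the ambient group. -/
def idComp {G : Type*} [Group G] [TopologicalSpace G] [IsTopologicalGroup G]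
    (H : Subgroup G) : Subgroup G :=
  (Subgroup.connectedComponentOfOne H).map H.subtype

/-- `W` is invariant under the natural action of `G ≤ O(n)` on `ℝⁿ`. -/
def Invariant {n : ℕ} (G : Subgroup (On n)) (W : Submodule ℝ (Fin n → ℝ)) : Prop :=
  ∀ g ∈ G, ∀ v ∈ W, Matrix.mulVec (g : Matrix (Fin n) (Fin n) ℝ) v ∈ W

/-- `V` is a nonzero irreducible `G`-invariant subspace of `ℝⁿ`. -/
def IsIrred {n : ℕ} (G : Subgroup (On n)) (V : Submodule ℝ (Fin n → ℝ)) : Prop :=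
  V ≠ ⊥ ∧ Invariant G V ∧ ∀ W ≤ V, Invariant G W → W = ⊥ ∨ W = V

open NormedSpace Filter Topology

section TopologicalGroup

variable {Γ : Type*} [Group Γ] [TopologicalSpace Γ] [IsTopologicalGroup Γ]

lemma coe_idComp (K : Subgroup Γ) : (idComp K : Set Γ) = connectedComponentIn (K : Set Γ) 1 := by
  rw [connectedComponentIn_eq_image K.one_mem]
  rfl

lemma idComp_le (K : Subgroup Γ) : idComp K ≤ K := fun _ hx ↦ by
  rw [← SetLike.mem_coe, coe_idComp] at hx
  exact connectedComponentIn_subset _ _ hx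

lemma idComp_mono {K L : Subgroup Γ} (h : K ≤ L) : idComp K ≤ idComp L := fun _ hx ↦ by
  rw [← SetLike.mem_coe, coe_idComp] at hx ⊢
  exact connectedComponentIn_mono 1 h hx

lemma normalizer_le_normalizer_idComp (K : Subgroup Γ) :
    Subgroup.normalizer (K : Set Γ) ≤ Subgroup.normalizer (idComp K : Set Γ) := by
  intro x hx
  let c : Γ ≃ₜ Γ := (Homeomorph.mulLeft x).trans (Homeomorph.mulRight x⁻¹)
  have hc : ∀ g, c g = x * g * x⁻¹ := fun _ ↦ rfl
  have hcK : c '' K = K := by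
    ext g
    simp only [Set.mem_image, SetLike.mem_coe, hc]
    refine ⟨fun ⟨h, hh, hg⟩ ↦ hg ▸ (hx h).mp hh, fun hg ↦ ⟨x⁻¹ * g * x, ?_, by group⟩⟩
    exact (hx _).mpr (by simpa [mul_assoc] using hg)
  have hcC : c '' (idComp K : Set Γ) = idComp K := by
    rw [coe_idComp, c.image_connectedComponentIn K.one_mem, hcK, hc, mul_one, mul_inv_cancel]
  refine Subgroup.mem_normalizer_iff.mpr fun g ↦ ?_
  have h := c.injective.mem_set_image (s := (idComp K : Set Γ)) (a := g)
  rw [hcC, hc] at h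
  exact h.symm

lemma isClosed_normalizer {K : Subgroup Γ} (hK : IsClosed (K : Set Γ)) :
    IsClosed (Subgroup.normalizer (K : Set Γ) : Set Γ) := by
  let T : Set Γ := ⋂ g ∈ K, (fun x ↦ x * g * x⁻¹) ⁻¹' K
  have hT : IsClosed T := isClosed_biInter fun g _ ↦ hK.preimage (by fun_prop)
  have hN : (Subgroup.normalizer (K : Set Γ) : Set Γ) = T ∩ Inv.inv ⁻¹' T := by
    ext x
    simp only [Set.mem_inter_iff, Set.mem_preimage, Set.mem_iInter, T, SetLike.mem_coe,
      Subgroup.mem_normalizer_iff, inv_inv]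
    refine ⟨fun hx ↦ ⟨fun g ↦ (hx g).mp, fun g hg ↦ (hx _).mpr (by group; exact hg)⟩,
      fun ⟨h₁, h₂⟩ g ↦ ⟨h₁ g, fun hg ↦ by simpa [mul_assoc] using h₂ _ hg⟩⟩
  rw [hN]
  exact hT.inter (hT.preimage continuous_inv)

lemma idComp_normalizer_eq {G H : Subgroup Γ}
    (hH : idComp (Subgroup.normalizer (H : Set Γ)) = H) (hG : idComp G = H) :
    idComp (Subgroup.normalizer (G : Set Γ)) = H := by
  refine le_antisymm ?_ (hG ▸ idComp_mono Subgroup.le_normalizer)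
  calc idComp (Subgroup.normalizer (G : Set Γ))
      ≤ idComp (Subgroup.normalizer (H : Set Γ)) :=
        idComp_mono (hG ▸ normalizer_le_normalizer_idComp G)
    _ = H := hH

lemma relIndex_ne_zero_of_idComp_le [CompactSpace Γ] {N G : Subgroup Γ}
    (hN : IsClosed (N : Set Γ)) (hloc : connectedComponentIn (N : Set Γ) 1 ∈ 𝓝[N] 1)
    (hG : idComp N ≤ G) : G.relIndex N ≠ 0 := by
  have : CompactSpace N := isCompact_iff_compactSpace.mp hN.isCompact
  have hmem : (G.subgroupOf N : Set N) ∈ 𝓝 1 := by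
    rw [mem_nhds_subtype_iff_nhdsWithin]
    refine Filter.mem_of_superset hloc fun x hx ↦
      ⟨⟨x, connectedComponentIn_subset _ _ hx⟩, Subgroup.mem_subgroupOf.mpr (hG ?_), rfl⟩
    rwa [← SetLike.mem_coe, coe_idComp]
  have := Subgroup.quotient_finite_of_isOpen _ (Subgroup.isOpen_of_mem_nhds _ hmem)
  exact Subgroup.index_ne_zero_of_finite

end TopologicalGroup

lemma tendsto_round_div_mul {ι : Type*} {l : Filter ι} {r : ι → ℝ}
    (hr : Tendsto r l (𝓝 0)) (hr0 : ∀ i, r i ≠ 0) (t : ℝ) :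
    Tendsto (fun i ↦ (round (t / r i) : ℝ) * r i) l (𝓝 t) := by
  have hbound : ∀ i, ‖t - round (t / r i) * r i‖ ≤ |r i| / 2 := fun i ↦ by
    have h : t - round (t / r i) * r i = (t / r i - round (t / r i)) * r i := by
      field_simp [hr0 i]
    rw [Real.norm_eq_abs, h, abs_mul]
    exact (mul_le_mul_of_nonneg_right (abs_sub_round _) (abs_nonneg _)).trans_eq (by ring)
  have hlim : Tendsto (fun i ↦ |r i| / 2) l (𝓝 0) := by
    simpa using (hr.abs).div_const 2
  simpa using (tendsto_const_nhds (x := t)).sub (squeeze_zero_norm hbound hlim)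

section ClosedSubmonoid

variable {A : Type*} [NormedRing A] [NormedAlgebra ℝ A] [CompleteSpace A]

/-- Mathlib's lemmas on `exp` ask for a `ℚ`-algebra structure; it is only a local instance since
a global one would create a diamond. -/
noncomputable abbrev normedAlgebraRatOfReal : NormedAlgebra ℚ A :=
  NormedAlgebra.restrictScalars ℚ ℝ A

attribute [local instance] normedAlgebraRatOfReal

lemma exp_neg_mul_exp (x : A) : exp (-x) * exp x = 1 := by
  simpa using (SemiconjBy.one_left x).exp_neg_mul_mul_exp_eq_self

variable {S : Submonoid A}

lemma exp_neg_mem (hinv : ∀ a ∈ S, ∃ b ∈ S, b * a = 1) {x : A} (hx : exp x ∈ S) :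
    exp (-x) ∈ S := by
  obtain ⟨b, hbS, hb⟩ := hinv _ hx
  have hx' : exp x * exp (-x) = 1 := by simpa using exp_neg_mul_exp (-x)
  have : b = exp (-x) := by
    calc b = b * (exp x * exp (-x)) := by rw [hx', mul_one]
      _ = exp (-x) := by rw [← mul_assoc, hb, one_mul]
  exact this ▸ hbS

lemma exp_zsmul_mem (hinv : ∀ a ∈ S, ∃ b ∈ S, b * a = 1) {x : A} (hx : exp x ∈ S) (c : ℤ) :
    exp (c • x) ∈ S := by
  obtain ⟨k, rfl | rfl⟩ := c.eq_nat_or_neg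
  · rw [natCast_zsmul, NormedSpace.exp_nsmul]
    exact S.pow_mem hx k
  · rw [neg_zsmul, natCast_zsmul, ← smul_neg, NormedSpace.exp_nsmul]
    exact S.pow_mem (exp_neg_mem hinv hx) k

/-- `exp (t v)` is the limit of `g (t / m) ^ m`, read through a local logarithm. -/
lemma exp_smul_mem_of_hasDerivAt (hS : IsClosed (S : Set A)) {g : ℝ → A} {v : A}
    (hgS : ∀ u, g u ∈ S) (hg0 : g 0 = 1) (hg : HasDerivAt g v 0) (t : ℝ) :
    exp (t • v) ∈ S := by
  rcases eq_or_ne t 0 with rfl | ht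
  · simpa [← hg0] using hgS 0
  have hexp : HasStrictFDerivAt (exp : A → A)
      ((ContinuousLinearEquiv.refl ℝ A : A ≃L[ℝ] A) : A →L[ℝ] A) 0 :=
    hasStrictFDerivAt_exp_zero
  let log := hexp.localInverse
  let f : ℝ → A := fun u ↦ log (g u)
  have hf0 : f 0 = 0 := by
    simpa [f, hg0, exp_zero] using hexp.localInverse_apply_image
  have hf : HasDerivAt f v 0 := by
    have hlog := hexp.to_localInverse.hasFDerivAt
    rw [exp_zero, ← hg0] at hlog
    exact hlog.comp_hasDerivAt 0 hg
  have hexpf : ∀ᶠ u in 𝓝 0, exp (f u) = g u := by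
    have h := hexp.eventually_right_inverse
    rw [exp_zero, ← hg0] at h
    exact hg.continuousAt.eventually h
  have hseq : Tendsto (fun m : ℕ ↦ t / m) atTop (𝓝[≠] 0) :=
    tendsto_nhdsWithin_iff.mpr ⟨tendsto_const_div_atTop_nhds_zero_nat t,
      (eventually_gt_atTop 0).mono fun m hm ↦ div_ne_zero ht (by positivity)⟩
  have hlim : Tendsto (fun m : ℕ ↦ (m : ℝ) • f (t / m)) atTop (𝓝 (t • v)) := by
    have h := ((hasDerivAt_iff_tendsto_slope_zero.mp hf).comp hseq).const_smul t
    refine h.congr' ((eventually_gt_atTop 0).mono fun m hm ↦ ?_)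
    simp only [Function.comp_apply, zero_add, hf0, sub_zero, smul_smul]
    congr 1
    field_simp
  have hmem : ∀ᶠ m : ℕ in atTop, exp ((m : ℝ) • f (t / m)) ∈ S := by
    filter_upwards [(hseq.mono_right nhdsWithin_le_nhds).eventually hexpf] with m hm
    rw [Nat.cast_smul_eq_nsmul, NormedSpace.exp_nsmul, hm]
    exact S.pow_mem (hgS _) m
  exact hS.mem_of_tendsto ((exp_continuous.tendsto _).comp hlim) hmem

def Submonoid.lieAlgebra (S : Submonoid A) (hS : IsClosed (S : Set A)) : Submodule ℝ A where
  carrier := {x | ∀ t : ℝ, exp (t • x) ∈ S}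
  zero_mem' t := by simp
  add_mem' {x y} hx hy := by
    refine exp_smul_mem_of_hasDerivAt hS (g := fun u ↦ exp (u • x) * exp (u • y))
      (fun u ↦ S.mul_mem (hx u) (hy u)) (by simp) ?_
    simpa using
      (hasDerivAt_exp_smul_const x (0 : ℝ)).fun_mul (hasDerivAt_exp_smul_const y (0 : ℝ))
  smul_mem' c x hx t := by simpa [smul_smul] using hx (t * c)

lemma Submonoid.mem_lieAlgebra {hS : IsClosed (S : Set A)} {x : A} :
    x ∈ S.lieAlgebra hS ↔ ∀ t : ℝ, exp (t • x) ∈ S :=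
  Iff.rfl

lemma exp_mem_connectedComponentIn {hS : IsClosed (S : Set A)} {x : A}
    (hx : x ∈ S.lieAlgebra hS) : exp x ∈ connectedComponentIn (S : Set A) 1 := by
  have hcurve : IsPreconnected (Set.range fun t : ℝ ↦ exp (t • x)) :=
    isPreconnected_range (by fun_prop)
  exact hcurve.subset_connectedComponentIn ⟨0, by simp⟩ (Set.range_subset_iff.mpr hx) ⟨1, by simp⟩

lemma hasStrictFDerivAt_exp_mul_exp {E : Type*} [NormedAddCommGroup E] [NormedSpace ℝ E]
    (P Q : E →L[ℝ] A) : HasStrictFDerivAt (fun z ↦ exp (P z) * exp (Q z)) (P + Q) 0 := by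
  have hexp : ∀ R : E →L[ℝ] A, HasStrictFDerivAt (fun z ↦ exp (R z)) R 0 := fun R ↦ by
    have h : HasStrictFDerivAt (exp : A → A) (1 : A →L[ℝ] A) (R 0) := by
      rw [map_zero]
      exact hasStrictFDerivAt_exp_zero
    simpa [Function.comp_def, ContinuousLinearMap.one_def] using h.comp 0 R.hasStrictFDerivAt
  have h := (hexp P).mul' (hexp Q)
  simp only [map_zero, exp_zero, one_smul, MulOpposite.op_one] at h
  rwa [add_comm] at h

/-- The integer multiples `round (t / ‖Z m‖) • Z m` tend to `t • W`. -/
lemma mem_lieAlgebra_of_tendsto (hS : IsClosed (S : Set A))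
    (hinv : ∀ a ∈ S, ∃ b ∈ S, b * a = 1) {Z : ℕ → A} {W : A} (hZ : Tendsto Z atTop (𝓝 0))
    (hZ0 : ∀ m, Z m ≠ 0) (hZS : ∀ m, exp (Z m) ∈ S)
    (hW : Tendsto (fun m ↦ ‖Z m‖⁻¹ • Z m) atTop (𝓝 W)) : W ∈ S.lieAlgebra hS := by
  intro t
  let c : ℕ → ℤ := fun m ↦ round (t / ‖Z m‖)
  have hc : Tendsto (fun m ↦ (c m : ℝ) * ‖Z m‖) atTop (𝓝 t) :=
    tendsto_round_div_mul (by simpa using hZ.norm) (fun m ↦ norm_ne_zero_iff.mpr (hZ0 m)) t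
  have hlim : Tendsto (fun m ↦ (c m : ℝ) • Z m) atTop (𝓝 (t • W)) := by
    refine (hc.smul hW).congr fun m ↦ ?_
    rw [smul_smul, mul_assoc, mul_inv_cancel₀ (norm_ne_zero_iff.mpr (hZ0 m)), mul_one]
  have hmem : ∀ m, exp ((c m : ℝ) • Z m) ∈ S := fun m ↦ by
    simpa [Int.cast_smul_eq_zsmul] using exp_zsmul_mem hinv (hZS m) (c m)
  exact hS.mem_of_tendsto ((exp_continuous.tendsto _).comp hlim) (Eventually.of_forall hmem)

/-- Otherwise the normalized `Z` accumulate, by compactness of the unit sphere, at a unit vector of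
`M` that lies in the Lie algebra. -/
lemma eventually_eq_zero_of_exp_mem [FiniteDimensional ℝ A] (hS : IsClosed (S : Set A))
    (hinv : ∀ a ∈ S, ∃ b ∈ S, b * a = 1) {M : Submodule ℝ A} (hM : Disjoint (S.lieAlgebra hS) M) :
    ∀ᶠ Z in 𝓝 (0 : A), Z ∈ M → exp Z ∈ S → Z = 0 := by
  by_contra h
  obtain ⟨Z, hZ, hZM⟩ := frequently_iff_seq_forall.mp (not_eventually.mp h)
  simp only [Classical.not_imp] at hZM
  have hsphere : ∀ m, ‖Z m‖⁻¹ • Z m ∈ Metric.sphere (0 : A) 1 := fun m ↦ by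
    simp [norm_smul, inv_mul_cancel₀ (norm_ne_zero_iff.mpr (hZM m).2.2)]
  obtain ⟨W, hW1, φ, hφ, hW⟩ := (isCompact_sphere (0 : A) 1).tendsto_subseq hsphere
  have hWM : W ∈ M := M.closed_of_finiteDimensional.mem_of_tendsto hW
    (Eventually.of_forall fun j ↦ M.smul_mem _ (hZM (φ j)).1)
  have hWL : W ∈ S.lieAlgebra hS := mem_lieAlgebra_of_tendsto hS hinv (hZ.comp hφ.tendsto_atTop)
    (fun j ↦ (hZM (φ j)).2.2) (fun j ↦ (hZM (φ j)).2.1) hW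
  simp [Submodule.disjoint_def.mp hM W hWL hWM] at hW1

theorem Submonoid.connectedComponentIn_mem_nhdsWithin_one [FiniteDimensional ℝ A]
    (hS : IsClosed (S : Set A)) (hinv : ∀ a ∈ S, ∃ b ∈ S, b * a = 1) :
    connectedComponentIn (S : Set A) 1 ∈ 𝓝[S] 1 := by
  set L := S.lieAlgebra hS
  obtain ⟨M, hLM⟩ := L.exists_isCompl
  let e : (L × M) ≃L[ℝ] A := (L.prodEquivOfIsCompl M hLM).toContinuousLinearEquiv
  let ψ : L × M → A := fun p ↦ exp (p.1 : A) * exp (p.2 : A)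
  have hψ : HasStrictFDerivAt ψ (e : L × M →L[ℝ] A) 0 :=
    (hasStrictFDerivAt_exp_mul_exp (L.subtypeL.comp (.fst ℝ L M))
      (M.subtypeL.comp (.snd ℝ L M))).congr_fderiv (ContinuousLinearMap.ext fun p ↦ by simp [e])
  have hmap : Filter.map ψ (𝓝 0) = 𝓝 1 := by simpa [ψ] using hψ.map_nhds_eq_of_equiv
  have hsnd : Tendsto (fun p : L × M ↦ (p.2 : A)) (𝓝 0) (𝓝 0) :=
    (continuous_subtype_val.comp continuous_snd).tendsto' 0 0 rfl
  rw [mem_nhdsWithin_iff_eventually, ← hmap, eventually_map]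
  filter_upwards [hsnd.eventually (eventually_eq_zero_of_exp_mem hS hinv hLM.disjoint)]
    with ⟨Y, Z⟩ hZ hψS
  have hZS : exp (Z : A) ∈ S := by
    have hY : exp (-(Y : A)) ∈ S := by simpa using Submonoid.mem_lieAlgebra.mp Y.2 (-1)
    have : exp (-(Y : A)) * ψ (Y, Z) = exp (Z : A) := by
      rw [← mul_assoc, exp_neg_mul_exp, one_mul]
    exact this ▸ S.mul_mem hY hψS
  have hZ0 : (Z : A) = 0 := hZ Z.2 hZS
  simpa [ψ, hZ0] using exp_mem_connectedComponentIn Y.2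

end ClosedSubmonoid

lemma Topology.IsEmbedding.connectedComponentIn_mem_nhdsWithin {X Y : Type*}
    [TopologicalSpace X] [TopologicalSpace Y] {f : X → Y} (hf : IsEmbedding f) {s : Set X}
    {x : X} (hx : x ∈ s) (h : connectedComponentIn (f '' s) (f x) ∈ 𝓝[f '' s] (f x)) :
    connectedComponentIn s x ∈ 𝓝[s] x := by
  rw [← hf.isInducing.map_nhdsWithin_eq] at h
  set C := connectedComponentIn (f '' s) (f x)
  have hCs : f ⁻¹' C ⊆ s := fun y hy ↦ by
    obtain ⟨z, hz, hzy⟩ := connectedComponentIn_subset _ _ hy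
    exact hf.injective hzy ▸ hz
  have hpre : IsPreconnected (f ⁻¹' C) := by
    rw [← hf.isInducing.isPreconnected_image, Set.image_preimage_eq_of_subset
      ((connectedComponentIn_subset _ _).trans (Set.image_subset_range f s))]
    exact isPreconnected_connectedComponentIn
  exact Filter.mem_of_superset h (hpre.subset_connectedComponentIn
    (mem_connectedComponentIn (Set.mem_image_of_mem f hx)) hCs)

instance (n : ℕ) : CompactSpace (On n) := by
  refine isCompact_iff_compactSpace.mp <|
    (isCompact_closedBall (0 : ℝ) 1).matrix.of_isClosed_subset isClosed_unitary fun U hU i j ↦ ?_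
  simpa using entry_norm_bound_of_unitary hU i j

section OrthogonalGroup

attribute [local instance] Matrix.linftyOpNormedRing Matrix.linftyOpNormedAlgebra

lemma On.connectedComponentIn_mem_nhdsWithin_one {n : ℕ} {N : Subgroup (On n)}
    (hN : IsClosed (N : Set (On n))) : connectedComponentIn (N : Set (On n)) 1 ∈ 𝓝[N] 1 := by
  let S := N.toSubmonoid.map (Matrix.orthogonalGroup (Fin n) ℝ).subtype
  have hS : IsClosed (S : Set (Matrix (Fin n) (Fin n) ℝ)) :=
    (hN.isCompact.image continuous_subtype_val).isClosed
  have hinv : ∀ a ∈ S, ∃ b ∈ S, b * a = 1 := by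
    rintro _ ⟨x, hx, rfl⟩
    exact ⟨_, ⟨x⁻¹, N.inv_mem hx, rfl⟩, congrArg Subtype.val (inv_mul_cancel x)⟩
  exact IsEmbedding.subtypeVal.connectedComponentIn_mem_nhdsWithin N.one_mem
    (S.connectedComponentIn_mem_nhdsWithin_one hS hinv)

end OrthogonalGroup

theorem key_step_general (n : ℕ) (H : Subgroup (On n))
    (hH : idComp (Subgroup.normalizer (H : Set (On n))) = H)
    (G : Subgroup (On n)) (hGcl : IsClosed (G : Set (On n))) (hG0 : idComp G = H) :
    idComp (Subgroup.normalizer (G : Set (On n))) = H ∧ G.relIndex (Subgroup.normalizer (G : Set (On n))) ≠ 0 := by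
  have hN := idComp_normalizer_eq hH hG0
  have hNcl := isClosed_normalizer hGcl
  refine ⟨hN, relIndex_ne_zero_of_idComp_le hNcl
    (On.connectedComponentIn_mem_nhdsWithin_one hNcl) ?_⟩
  rw [hN, ← hG0]
  exact idComp_le G

/-- If a closed connected `H ≤ O(n)` equals the identity component of its normalizer,
then any closed subgroup `G` with identity component `H` satisfies
`N_{O(n)}(G)⁰ = H`, and `G` has finite index in `N_{O(n)}(G)`. -/
theorem key_step (n : ℕ) (H : Subgroup (On n)) (hcl : IsClosed (H : Set (On n)))
    (hconn : IsConnected (H : Set (On n))) (hH : idComp (Subgroup.normalizer (H : Set (On n))) = H)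
    (G : Subgroup (On n)) (hGcl : IsClosed (G : Set (On n))) (hG0 : idComp G = H) :
    idComp (Subgroup.normalizer (G : Set (On n))) = H ∧ G.relIndex (Subgroup.normalizer (G : Set (On n))) ≠ 0 :=
  key_step_general n H hH G hGcl hG0
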